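/- arXiv:2408.05441 — 2 statements merged into one kernel-verified Lean document; each statement's English description precedes it below -/
import Mathlib

section
/- Let f(z) = (2/3)(e^{i2π/3}/(z-1) - (1/2)/(z+1/2) + e^{-i2π/3}/(z+2)) and g(z) = -1 + e^{iπ/3}/z - e^{-iπ/3}/(z+1), and define ḡ(z) := conj(g(conj(z))). Then for all complex z not in {-2, -1, -1/2, 0, 1}, f(z)·ḡ(z) = 1/(z-1) - 1/z - 1/(z+1) + 1/(z+2) + 1/(z+1/2). In particular f·ḡ is a rational function with real coefficients. -/
open Complex

/-!
With `ω = e^{iπ/3}` one has `ω + ω̄ = 1` and `ω ω̄ = 1`, and `e^{±2iπ/3} = ω², ω̄²`, so both `f` and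
`ḡ` are rational in `z` with coefficients in `ℚ(ω)`. Substituting `ω̄ = 1 - ω` and clearing
denominators, the two sides differ by a multiple of `ω² - ω + 1`, so the identity holds over any
field of characteristic zero for either root of `X² - X + 1`.
-/

noncomputable def hexF (z : ℂ) : ℂ :=
  (2/3) * (Complex.exp (2 * Real.pi * Complex.I / 3) / (z - 1)
    - (1/2) / (z + 1/2) + Complex.exp (-(2 * Real.pi * Complex.I) / 3) / (z + 2))

noncomputable def hexG (z : ℂ) : ℂ :=
  -1 + Complex.exp (Real.pi * Complex.I / 3) / z
    - Complex.exp (-(Real.pi * Complex.I) / 3) / (z + 1)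

noncomputable def hexGbar (z : ℂ) : ℂ := starRingEnd ℂ (hexG (starRingEnd ℂ z))

theorem hexagon_identity_of_add_eq_one_of_mul_eq_one {K : Type*} [Field K] [CharZero K]
    {ω ω' z : K}
    (hsum : ω + ω' = 1) (hprod : ω * ω' = 1)
    (h2 : z ≠ -2) (h1 : z ≠ -1) (hhalf : z ≠ -1/2) (h0 : z ≠ 0) (hm1 : z ≠ 1) :
    (2/3) * (ω ^ 2 / (z - 1) - (1/2) / (z + 1/2) + ω' ^ 2 / (z + 2)) *
        (-1 + ω' / z - ω / (z + 1)) =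
      1 / (z - 1) - 1 / z - 1 / (z + 1) + 1 / (z + 2) + 1 / (z + 1/2) := by
  have hω' : ω' = 1 - ω := by linear_combination hsum
  have hω : ω ^ 2 = ω - 1 := by linear_combination -hprod + ω * hsum
  subst hω'
  have : z - 1 ≠ 0 := sub_ne_zero.mpr hm1
  have : z + 1 ≠ 0 := fun h ↦ h1 (eq_neg_of_add_eq_zero_left h)
  have : z + 2 ≠ 0 := fun h ↦ h2 (eq_neg_of_add_eq_zero_left h)
  have : 2 * z + 1 ≠ 0 := fun h ↦ hhalf (by linear_combination h / 2)
  have hω'2 : (1 - ω) ^ 2 = -ω := by linear_combination hω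
  rw [hω, hω'2, show z + 1/2 = (2 * z + 1) / 2 by ring]
  field_simp
  linear_combination -6 * (2 * z + 1) ^ 2 * hω

section

local notation "ω" => Complex.exp (Real.pi * Complex.I / 3)

theorem exp_neg_pi_div_three_mul_I :
    Complex.exp (-(Real.pi * Complex.I) / 3) = starRingEnd ℂ ω := by
  rw [← Complex.exp_conj, map_div₀, map_mul, conj_ofReal, conj_I, map_ofNat, mul_neg, neg_div]

theorem exp_two_pi_div_three_mul_I : Complex.exp (2 * Real.pi * Complex.I / 3) = ω ^ 2 := by
  rw [← Complex.exp_nat_mul]; ring_nf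

theorem exp_neg_two_pi_div_three_mul_I :
    Complex.exp (-(2 * Real.pi * Complex.I) / 3) = starRingEnd ℂ ω ^ 2 := by
  rw [← exp_neg_pi_div_three_mul_I, ← Complex.exp_nat_mul]; ring_nf

theorem add_conj_exp_pi_div_three_mul_I : ω + starRingEnd ℂ ω = 1 := by
  rw [Complex.add_conj, show (Real.pi : ℂ) * I / 3 = ((Real.pi / 3 : ℝ) : ℂ) * I by push_cast; ring,
    Complex.exp_ofReal_mul_I_re, Real.cos_pi_div_three]
  norm_num

theorem mul_conj_exp_pi_div_three_mul_I : ω * starRingEnd ℂ ω = 1 := by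
  rw [Complex.mul_conj, Complex.normSq_eq_norm_sq,
    show (Real.pi : ℂ) * I / 3 = ((Real.pi / 3 : ℝ) : ℂ) * I by push_cast; ring,
    Complex.norm_exp_ofReal_mul_I]
  norm_num

theorem hexF_eq (z : ℂ) :
    hexF z = (2/3) * (ω ^ 2 / (z - 1) - (1/2) / (z + 1/2) + starRingEnd ℂ ω ^ 2 / (z + 2)) := by
  rw [hexF, exp_two_pi_div_three_mul_I, exp_neg_two_pi_div_three_mul_I]

theorem hexGbar_eq (z : ℂ) : hexGbar z = -1 + starRingEnd ℂ ω / z - ω / (z + 1) := by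
  simp only [hexGbar, hexG, exp_neg_pi_div_three_mul_I, map_sub, map_add, map_div₀, map_neg,
    map_one, conj_conj]

end

theorem stmt_0 :
    ∀ z : ℂ, z ∉ ({-2, -1, -1/2, 0, 1} : Set ℂ) →
      hexF z * hexGbar z =
        1 / (z - 1) - 1 / z - 1 / (z + 1) + 1 / (z + 2) + 1 / (z + 1/2) := by
  intro z hz
  simp only [Set.mem_insert_iff, Set.mem_singleton_iff, not_or] at hz
  obtain ⟨h2, h1, hhalf, h0, hm1⟩ := hz
  rw [hexF_eq, hexGbar_eq]
  exact hexagon_identity_of_add_eq_one_of_mul_eq_one add_conj_exp_pi_div_three_mul_I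
    mul_conj_exp_pi_div_three_mul_I h2 h1 hhalf h0 hm1
end

section
/- Let ω = e^{i2π/3}. Then the function g(z) = -1 + e^{iπ/3}/z - e^{-iπ/3}/(z+1) satisfies g(ω) = 0 and g'(ω) = 0, and the function f(z) = (2/3)(e^{i2π/3}/(z-1) - (1/2)/(z+1/2) + e^{-i2π/3}/(z+2)) satisfies f(ω) = 0 and f'(ω) = 0. That is, both f and g have a zero of order at least 2 at ω. -/
open Complex

/-! With ω = exp(2πi/3) we have ω² + ω + 1 = 0, and the coefficients of `hexG` and `hexF` are
`exp(πi/3) = -ω²`, `exp(-πi/3) = -ω` and `exp(-2πi/3) = ω²`. Clearing denominators and reducing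
modulo ω² + ω + 1 gives
`g(z) = -(z - ω)² / (z (z + 1))` and `f(z) = -(z - ω)² / ((z - 1)(z + 1/2)(z + 2))`,
so both have a double zero at ω. -/

local notation "ω" => Complex.exp (2 * Real.pi * Complex.I / 3)

theorem eq_zero_and_deriv_eq_zero_of_eventuallyEq_sq_sub_mul {𝕜 : Type*}
    [NontriviallyNormedField 𝕜] {f h : 𝕜 → 𝕜} {a : 𝕜} (hh : DifferentiableAt 𝕜 h a)
    (hf : f =ᶠ[nhds a] fun z => (z - a) ^ 2 * h z) : f a = 0 ∧ deriv f a = 0 := by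
  have hderiv : HasDerivAt (fun z => (z - a) ^ 2 * h z) 0 a := by
    simpa using (((hasDerivAt_id a).sub_const a).fun_pow 2).fun_mul hh.hasDerivAt
  exact ⟨by simpa using hf.eq_of_nhds, (hderiv.congr_of_eventuallyEq hf).deriv⟩

section CubeRootIdentities

variable {K : Type*} [Field K] {w z : K}

theorem neg_one_add_div_sub_div_eq_sq_sub_mul (hw : w ^ 2 + w + 1 = 0) (h0 : z ≠ 0)
    (h1 : z + 1 ≠ 0) :
    -1 + -w ^ 2 / z - -w / (z + 1) = (z - w) ^ 2 * -(z * (z + 1))⁻¹ := by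
  field_simp
  linear_combination (-z) * hw

theorem two_thirds_mul_div_sub_div_add_div_eq_sq_sub_mul [CharZero K] (hw : w ^ 2 + w + 1 = 0)
    (h1 : z - 1 ≠ 0) (h2 : z + 1 / 2 ≠ 0) (h3 : z + 2 ≠ 0) :
    2 / 3 * (w / (z - 1) - 1 / 2 / (z + 1 / 2) + w ^ 2 / (z + 2)) =
      (z - w) ^ 2 * -((z - 1) * (z + 1 / 2) * (z + 2))⁻¹ := by
  rw [show z + 1 / 2 = (2 * z + 1) / 2 by ring] at h2 ⊢
  have h2' : 2 * z + 1 ≠ 0 := by simpa using h2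
  field_simp
  linear_combination (2 * z ^ 2 - z + 2) * hw

end CubeRootIdentities

theorem omega_sq_add_omega_add_one : ω ^ 2 + ω + 1 = 0 := by
  have hprim : IsPrimitiveRoot ω 3 := by
    simpa using Complex.isPrimitiveRoot_exp 3 (by norm_num)
  have hsum := hprim.geom_sum_eq_zero (by norm_num)
  simp only [Finset.sum_range_succ, Finset.sum_range_zero] at hsum
  linear_combination hsum

theorem omega_add_ne_zero {c : ℂ} (hc : c ^ 2 - c + 1 ≠ 0) : ω + c ≠ 0 := fun h =>
  hc (by linear_combination omega_sq_add_omega_add_one + (c - ω - 1) * h)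

theorem omega_mul_omega_add_one_ne_zero : ω * (ω + 1) ≠ 0 :=
  mul_ne_zero (Complex.exp_ne_zero _) (omega_add_ne_zero (by norm_num))

theorem omega_sub_one_mul_add_half_mul_add_two_ne_zero :
    (ω - 1) * (ω + 1 / 2) * (ω + 2) ≠ 0 := by
  refine mul_ne_zero (mul_ne_zero ?_ (omega_add_ne_zero (by norm_num)))
    (omega_add_ne_zero (by norm_num))
  simpa [sub_eq_add_neg] using omega_add_ne_zero (c := -1) (by norm_num)

theorem exp_pi_mul_I_div_three : Complex.exp (Real.pi * Complex.I / 3) = -ω ^ 2 := by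
  rw [← Complex.exp_nat_mul,
    show Real.pi * Complex.I / 3 = (2 : ℕ) * (2 * Real.pi * Complex.I / 3) - Real.pi * Complex.I by
      push_cast; ring,
    Complex.exp_sub, Complex.exp_pi_mul_I]
  ring

theorem exp_neg_pi_mul_I_div_three : Complex.exp (-(Real.pi * Complex.I) / 3) = -ω := by
  rw [show -(Real.pi * Complex.I) / 3 = 2 * Real.pi * Complex.I / 3 - Real.pi * Complex.I by ring,
    Complex.exp_sub, Complex.exp_pi_mul_I]
  ring

theorem exp_neg_two_pi_mul_I_div_three :
    Complex.exp (-(2 * Real.pi * Complex.I) / 3) = ω ^ 2 := by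
  rw [← Complex.exp_nat_mul,
    show -(2 * Real.pi * Complex.I) / 3
        = (2 : ℕ) * (2 * Real.pi * Complex.I / 3) - 2 * Real.pi * Complex.I by
      push_cast; ring,
    Complex.exp_sub, Complex.exp_two_pi_mul_I, div_one]

theorem hexG_eventuallyEq_sq_sub_mul :
    hexG =ᶠ[nhds ω] fun z => (z - ω) ^ 2 * -(z * (z + 1))⁻¹ := by
  filter_upwards [(by fun_prop : Continuous fun z : ℂ => z * (z + 1)).continuousAt.eventually_ne
    omega_mul_omega_add_one_ne_zero] with z hz
  rw [hexG, exp_pi_mul_I_div_three, exp_neg_pi_mul_I_div_three]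
  exact neg_one_add_div_sub_div_eq_sq_sub_mul omega_sq_add_omega_add_one
    (left_ne_zero_of_mul hz) (right_ne_zero_of_mul hz)

theorem hexF_eventuallyEq_sq_sub_mul :
    hexF =ᶠ[nhds ω] fun z => (z - ω) ^ 2 * -((z - 1) * (z + 1 / 2) * (z + 2))⁻¹ := by
  filter_upwards [(by fun_prop : Continuous fun z : ℂ => (z - 1) * (z + 1 / 2) * (z + 2)
    ).continuousAt.eventually_ne omega_sub_one_mul_add_half_mul_add_two_ne_zero] with z hz
  rw [hexF, exp_neg_two_pi_mul_I_div_three]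
  exact two_thirds_mul_div_sub_div_add_div_eq_sq_sub_mul omega_sq_add_omega_add_one
    (left_ne_zero_of_mul (left_ne_zero_of_mul hz)) (right_ne_zero_of_mul (left_ne_zero_of_mul hz))
    (right_ne_zero_of_mul hz)

theorem stmt_18 :
    hexG (Complex.exp (2 * Real.pi * Complex.I / 3)) = 0 ∧
    deriv hexG (Complex.exp (2 * Real.pi * Complex.I / 3)) = 0 ∧
    hexF (Complex.exp (2 * Real.pi * Complex.I / 3)) = 0 ∧
    deriv hexF (Complex.exp (2 * Real.pi * Complex.I / 3)) = 0 := by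
  have hG := eq_zero_and_deriv_eq_zero_of_eventuallyEq_sq_sub_mul
    (by fun_prop (disch := exact omega_mul_omega_add_one_ne_zero)) hexG_eventuallyEq_sq_sub_mul
  have hF := eq_zero_and_deriv_eq_zero_of_eventuallyEq_sq_sub_mul
    (by fun_prop (disch := exact omega_sub_one_mul_add_half_mul_add_two_ne_zero))
    hexF_eventuallyEq_sq_sub_mul
  exact ⟨hG.1, hG.2, hF.1, hF.2⟩
end
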